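/- arXiv:1606.03281 — 2 statements merged into one kernel-verified Lean document; each statement's English description precedes it below -/
import Mathlib

section
/- For a sequence (p_k) in [0,1], independent Bernoulli(p_k) variables W_k, Y_n = (-1)^{W_1+...+W_n}, and any even number K = 2m of indices i_1 < i_2 < ... < i_K, one has E[Y_{i_1} Y_{i_2} ⋯ Y_{i_K}] = e_{i_1,i_2} · e_{i_3,i_4} ⋯ e_{i_{K-1}, i_K}, where e_{i,j} = ∏_{k=i+1}^{j} (1 - 2p_k). -/
/-!
Since `Y a * Y b = ∏_{a < k ≤ b} (-1) ^ W k` for `a ≤ b`, pairing consecutive factors turns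
`Y (i 0) * ⋯ * Y (i (2m-1))` into the product of the independent signs `(-1) ^ W k` over the
disjoint union of the intervals `(i (2l), i (2l+1)]`. Its expectation therefore factorizes, and
each sign has expectation `1 - 2 p k`.
-/

open MeasureTheory ProbabilityTheory Finset

-- `2 * l + 1 < 2 * m` unfolds to `2 * (l + 1) ≤ 2 * m`.
theorem Fin.prod_univ_two_mul {M : Type*} [CommMonoid M] {m : ℕ} (f : Fin (2 * m) → M) :
    ∏ l, f l =
      ∏ l : Fin m, f ⟨2 * l, Nat.mul_lt_mul_of_pos_left l.2 two_pos⟩ *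
        f ⟨2 * l + 1, Nat.mul_le_mul_left 2 l.2⟩ := by
  rw [← (finProdFinEquiv.trans (finCongr (mul_comm m 2))).prod_comp, Fintype.prod_prod_type]
  refine Finset.prod_congr rfl fun l _ => ?_
  simp [Fin.prod_univ_two, finProdFinEquiv, add_comm]

theorem neg_one_pow_sum_Icc_mul_neg_one_pow_sum_Icc {R : Type*} [CommMonoid R] [HasDistribNeg R]
    (f : ℕ → ℕ) {a b : ℕ} (hab : a ≤ b) :
    (-1 : R) ^ (∑ k ∈ Icc 1 a, f k) * (-1) ^ (∑ k ∈ Icc 1 b, f k) = ∏ k ∈ Ioc a b, (-1) ^ f k := by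
  have hsplit : ∑ k ∈ Icc 1 b, f k = ∑ k ∈ Icc 1 a, f k + ∑ k ∈ Ioc a b, f k := by
    have hIcc : ∀ n, Icc 1 n = Ioc 0 n := Finset.Icc_add_one_left_eq_Ioc 0
    rw [hIcc, hIcc]
    exact (sum_Ioc_consecutive f (Nat.zero_le a) hab).symm
  rw [hsplit, ← pow_add, ← add_assoc, pow_add, (Even.add_self _).neg_one_pow, one_mul,
    prod_pow_eq_pow_sum]

theorem pairwiseDisjoint_Ioc_of_le {ι α : Type*} [LinearOrder ι] [LinearOrder α]
    [LocallyFiniteOrder α] (s : Set ι) {a b : ι → α} (hab : ∀ l l', l < l' → b l ≤ a l') :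
    s.PairwiseDisjoint fun l => Ioc (a l) (b l) := by
  have key : ∀ l l', l < l' → Disjoint (Ioc (a l) (b l)) (Ioc (a l') (b l')) := fun l l' h =>
    disjoint_left.mpr fun x hx hx' =>
      ((mem_Ioc.mp hx).2.trans (hab l l' h)).not_gt (mem_Ioc.mp hx').1
  intro l _ l' _ hne
  rcases hne.lt_or_gt with h | h
  exacts [key l l' h, (key l' l h).symm]

section Integration

variable {Ω : Type*} [MeasurableSpace Ω] {μ : Measure Ω}

theorem ProbabilityTheory.iIndepFun.integral_finset_prod {ι 𝕜 : Type*} [RCLike 𝕜] {X : ι → Ω → 𝕜}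
    (hX : iIndepFun X μ) (mX : ∀ i, AEStronglyMeasurable (X i) μ) (s : Finset ι) :
    ∫ ω, ∏ i ∈ s, X i ω ∂μ = ∏ i ∈ s, ∫ ω, X i ω ∂μ := by
  simp_rw [← prod_coe_sort s]
  exact (hX.precomp Subtype.val_injective).integral_fun_prod_eq_prod_integral fun i => mX i

theorem integral_neg_one_pow_of_bernoulli [IsProbabilityMeasure μ] {W : Ω → ℕ}
    (hW : Measurable W) (hrange : ∀ ω, W ω = 0 ∨ W ω = 1) {p : ℝ} (hp : 0 ≤ p)
    (hWp : μ {ω | W ω = 1} = ENNReal.ofReal p) :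
    ∫ ω, (-1 : ℝ) ^ W ω ∂μ = 1 - 2 * p := by
  have hA : MeasurableSet {ω | W ω = 1} := hW (measurableSet_singleton 1)
  have hpow : ∀ ω, (-1 : ℝ) ^ W ω = 1 - 2 * {ω | W ω = 1}.indicator 1 ω := by
    intro ω
    rcases hrange ω with h | h <;> norm_num [h]
  simp_rw [hpow]
  rw [integral_sub (integrable_const 1) (((integrable_const 1).indicator hA).const_mul 2),
    integral_const_mul, integral_indicator_one hA, measureReal_def, hWp,
    ENNReal.toReal_ofReal hp]
  simp

end Integration

theorem coin_turning_product_expectation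
    {Ω : Type*} [MeasurableSpace Ω] (μ : Measure Ω) [IsProbabilityMeasure μ]
    (p : ℕ → ℝ) (hp : ∀ k, p k ∈ Set.Icc (0 : ℝ) 1)
    (W : ℕ → Ω → ℕ) (hWmeas : ∀ k, Measurable (W k))
    (hWrange : ∀ k ω, W k ω = 0 ∨ W k ω = 1)
    (hWindep : iIndepFun W μ)
    (hWp : ∀ k, μ {ω | W k ω = 1} = ENNReal.ofReal (p k))
    (Y : ℕ → Ω → ℝ)
    (hY : ∀ n ω, Y n ω = (-1 : ℝ) ^ (∑ k ∈ Finset.Icc 1 n, W k ω))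
    (e : ℕ → ℕ → ℝ)
    (he : ∀ i j, e i j = ∏ k ∈ Finset.Icc (i + 1) j, (1 - 2 * p k))
    (m : ℕ) (i : Fin (2 * m) → ℕ) (hi : StrictMono i) :
    ∫ ω, ∏ l : Fin (2 * m), Y (i l) ω ∂μ =
      ∏ l : Fin m, e (i ⟨2 * (l : ℕ), by omega⟩) (i ⟨2 * (l : ℕ) + 1, by omega⟩) := by
  set J : Fin m → Finset ℕ := fun l => Ioc (i ⟨2 * l, by omega⟩) (i ⟨2 * l + 1, by omega⟩)
  have hJ : ((univ : Finset (Fin m)) : Set (Fin m)).PairwiseDisjoint J :=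
    pairwiseDisjoint_Ioc_of_le _ fun l l' h => hi.monotone (Fin.mk_le_mk.mpr (by omega))
  have hprod : ∀ ω, ∏ l, Y (i l) ω = ∏ k ∈ univ.disjiUnion J hJ, (-1 : ℝ) ^ W k ω := fun ω => by
    rw [prod_disjiUnion, Fin.prod_univ_two_mul]
    refine prod_congr rfl fun l _ => ?_
    rw [hY, hY]
    exact neg_one_pow_sum_Icc_mul_neg_one_pow_sum_Icc (W · ω)
      (hi.monotone (Fin.mk_le_mk.mpr (by omega)))
  have hindep : iIndepFun (fun k ω => (-1 : ℝ) ^ W k ω) μ :=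
    hWindep.comp _ fun _ => measurable_from_top
  calc ∫ ω, ∏ l, Y (i l) ω ∂μ = ∫ ω, ∏ k ∈ univ.disjiUnion J hJ, (-1 : ℝ) ^ W k ω ∂μ := by
        simp_rw [hprod]
    _ = ∏ k ∈ univ.disjiUnion J hJ, ∫ ω, (-1 : ℝ) ^ W k ω ∂μ :=
        hindep.integral_finset_prod
          (fun k => (measurable_from_top.comp (hWmeas k)).aestronglyMeasurable) _
    _ = _ := by
        rw [prod_disjiUnion]
        refine prod_congr rfl fun l _ => ?_
        rw [he, Finset.Icc_add_one_left_eq_Ioc]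
        exact prod_congr rfl fun k _ =>
          integral_neg_one_pow_of_bernoulli (hWmeas k) (hWrange k) (hp k).1 (hWp k)
end

section
/- Let p_n = 1/n for n ≥ 2 and p_1 = 1/2, let W_n be independent Bernoulli(p_n), and Y_n = (-1)^{W_1 + ... + W_n}, S_N = Y_1 + ... + Y_N. Then for every positive integer K, lim_{N→∞} E[(S_N/N)^K] equals 0 if K is odd and 1/(K+1) if K is even. -/
/-!
Write `Y_{N+1} = Y_N ε_{N+1}` with `ε_{N+1} = (-1) ^ W_{N+1}`, which is independent of
`W_1, …, W_N` and has mean `(N - 1) / (N + 1)`. Expanding `S_{N+1} = S_N + Y_{N+1}` binomially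
and using `Y² = 1` expresses the mixed moments `E[S_{N+1}^a Y_{N+1}^b]`, `b ∈ {0, 1}`, through
those at time `N`. At scale `N^a` only two terms survive: `E[S_N^a]` grows by about
`a E[S_N^(a-1) Y_N]` per step, and `N (N - 1) E[S_N^a Y_N]` by about `a N² E[S_N^(a-1)]`.
By Stolz–Cesàro, induction on `a` gives `E[S_N^a] / N^a → m_a` and `E[S_N^a Y_N] / N^a → m_(a+1)`,
where `m_a` are the moments of the uniform law on `[-1, 1]`, characterised by
`m_0 = 1`, `m_1 = 0` and `(a + 3) m_(a+2) = (a + 1) m_a`.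
-/

open MeasureTheory ProbabilityTheory Finset Filter Asymptotics
open scoped Topology

/-- Stolz–Cesàro. -/
theorem tendsto_div_of_tendsto_sub_div_sub {a b : ℕ → ℝ} {c : ℝ} (hb : StrictMono b)
    (hb_top : Tendsto b atTop atTop)
    (h : Tendsto (fun n ↦ (a (n + 1) - a n) / (b (n + 1) - b n)) atTop (𝓝 c)) :
    Tendsto (fun n ↦ a n / b n) atTop (𝓝 c) := by
  have hdb : ∀ n, 0 < b (n + 1) - b n := fun n ↦ sub_pos.2 (hb n.lt_succ_self)
  have hstep : (fun n ↦ a (n + 1) - a n - c * (b (n + 1) - b n)) =o[atTop]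
      fun n ↦ b (n + 1) - b n := by
    refine (isLittleO_iff_tendsto fun n h0 ↦ absurd h0 (hdb n).ne').2 ?_
    refine (sub_self c ▸ h.sub_const c).congr fun n ↦ ?_
    field_simp [(hdb n).ne']
  have hsum := hstep.sum_range (fun n ↦ (hdb n).le) (by
    simp_rw [sum_range_sub, sub_eq_add_neg]
    exact tendsto_atTop_add_const_right _ _ hb_top)
  simp only [sum_sub_distrib, ← mul_sum, sum_range_sub (f := a), sum_range_sub (f := b)] at hsum
  have hconst : ∀ d : ℝ, (fun _ : ℕ ↦ d) =o[atTop] b := fun d ↦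
    isLittleO_const_left.2 (.inr (tendsto_norm_atTop_atTop.comp hb_top))
  have hb_sub : (fun n ↦ b n - b 0) =O[atTop] b := (isBigO_refl b _).sub (hconst _).isBigO
  have key : (fun n ↦ a n - c * b n) =o[atTop] b :=
    ((hsum.trans_isBigO hb_sub).add (hconst (a 0 - c * b 0))).congr_left fun n ↦ by ring
  refine (add_zero c ▸ key.tendsto_div_nhds_zero.const_add c).congr' ?_
  filter_upwards [hb_top.eventually_ne_atTop 0] with n hn
  field_simp
  ring

lemma tendsto_add_one_pow_sub_pow_div_pow (k : ℕ) :
    Tendsto (fun N : ℕ ↦ (((N : ℝ) + 1) ^ (k + 1) - (N : ℝ) ^ (k + 1)) / (N : ℝ) ^ k) atTop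
      (𝓝 (k + 1)) := by
  have hderiv : HasDerivAt (fun x : ℝ ↦ x ^ (k + 1)) (k + 1) 1 := by
    simpa using hasDerivAt_pow (k + 1) (1 : ℝ)
  have hinv : Tendsto (fun N : ℕ ↦ (N : ℝ)⁻¹) atTop (𝓝[≠] 0) :=
    (tendsto_inv_atTop_nhdsGT_zero.comp tendsto_natCast_atTop_atTop).mono_right
      (nhdsWithin_mono _ fun _ h ↦ ne_of_gt h)
  refine (hderiv.tendsto_slope_zero.comp hinv).congr' ?_
  filter_upwards [eventually_ne_atTop 0] with N hN
  have hN : (N : ℝ) ≠ 0 := Nat.cast_ne_zero.2 hN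
  have hsucc : 1 + (N : ℝ)⁻¹ = (N + 1) / N := by field_simp
  simp only [Function.comp_apply, smul_eq_mul, inv_inv, one_pow, hsucc, div_pow]
  field_simp
  ring

lemma tendsto_div_pow_succ_of_tendsto_sub_div_pow {u : ℕ → ℝ} {k : ℕ} {c : ℝ}
    (h : Tendsto (fun N : ℕ ↦ (u (N + 1) - u N) / (N : ℝ) ^ k) atTop (𝓝 c)) :
    Tendsto (fun N : ℕ ↦ u N / (N : ℝ) ^ (k + 1)) atTop (𝓝 (c / (k + 1))) := by
  refine tendsto_div_of_tendsto_sub_div_sub ?_ ?_ ?_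
  · exact fun m n hmn ↦ pow_lt_pow_left₀ (Nat.cast_lt.2 hmn) m.cast_nonneg k.succ_ne_zero
  · exact (tendsto_pow_atTop k.succ_ne_zero).comp tendsto_natCast_atTop_atTop
  · refine (h.div (tendsto_add_one_pow_sub_pow_div_pow k) (by positivity)).congr' ?_
    filter_upwards [eventually_ne_atTop 0] with N hN
    have hN : (N : ℝ) ≠ 0 := Nat.cast_ne_zero.2 hN
    push_cast
    rw [Pi.div_apply, div_div_div_cancel_right₀ (pow_ne_zero k hN)]

lemma tendsto_div_pow_of_eq_mul_add {v g : ℕ → ℝ} {a : ℕ} {c : ℝ}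
    (hrec : ∀ N, 1 ≤ N → v (N + 1) = ((N : ℝ) - 1) / (N + 1) * v N + g N)
    (hg : Tendsto (fun N : ℕ ↦ N * g N / (N : ℝ) ^ a) atTop (𝓝 c)) :
    Tendsto (fun N : ℕ ↦ v N / (N : ℝ) ^ a) atTop (𝓝 (c / (a + 2))) := by
  -- `N (N - 1) v N` has increments `N (N + 1) g N`
  set w : ℕ → ℝ := fun N ↦ N * (N - 1) * v N
  have hw : Tendsto (fun N : ℕ ↦ (w (N + 1) - w N) / (N : ℝ) ^ (a + 1)) atTop (𝓝 c) := by
    have hsucc : Tendsto (fun N : ℕ ↦ 1 + (N : ℝ)⁻¹) atTop (𝓝 1) := by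
      simpa using (tendsto_inv_atTop_zero.comp tendsto_natCast_atTop_atTop).const_add (1 : ℝ)
    refine (one_mul c ▸ hsucc.mul hg).congr' ?_
    filter_upwards [eventually_ge_atTop 1] with N hN
    have hN0 : (N : ℝ) ≠ 0 := by positivity
    simp only [w, hrec N hN]
    push_cast
    field_simp
    ring
  have hlim := (tendsto_div_pow_succ_of_tendsto_sub_div_pow hw).mul
    (tendsto_natCast_div_add_atTop (-1 : ℝ))
  rw [mul_one] at hlim
  convert hlim.congr' ?_ using 2
  · push_cast; ring
  filter_upwards [eventually_ge_atTop 2] with N hN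
  have hN1 : (N : ℝ) + -1 ≠ 0 := by
    have : (2 : ℝ) ≤ N := by exact_mod_cast hN
    linarith
  have hN0 : (N : ℝ) ≠ 0 := by positivity
  simp only [w, ← sub_eq_add_neg] at hN1 ⊢
  field_simp
  ring

/-- The moments of the uniform distribution on `[-1, 1]`. -/
noncomputable def uniformMoment (a : ℕ) : ℝ := if Even a then 1 / (a + 1) else 0

lemma uniformMoment_add_two (a : ℕ) :
    uniformMoment (a + 2) = (a + 1) * uniformMoment a / (a + 3) := by
  by_cases ha : Even a
  · have ha2 : Even (a + 2) := ha.add even_two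
    simp only [uniformMoment, ha, ha2, if_true]
    push_cast
    field_simp
    ring
  · have ha2 : ¬ Even (a + 2) := by simpa [Nat.even_add] using ha
    simp [uniformMoment, ha, ha2]

/-- `E[(-1) ^ W_{N+1}]` when `W_{N+1}` is Bernoulli with parameter `1 / (N + 1)`. -/
noncomputable def stayBias (N : ℕ) : ℝ := (N - 1) / (N + 1)

lemma abs_stayBias_le_one (N : ℕ) : |stayBias N| ≤ 1 := by
  rw [stayBias, abs_div, abs_of_pos (by positivity : (0 : ℝ) < N + 1), div_le_one (by positivity),
    abs_le]
  constructor <;> linarith [(N.cast_nonneg : (0 : ℝ) ≤ N)]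

lemma tendsto_stayBias : Tendsto stayBias atTop (𝓝 1) := by
  have h := (tendsto_natCast_div_add_atTop (1 : ℝ)).const_mul 2 |>.sub_const 1
  norm_num at h
  refine h.congr fun N ↦ ?_
  rw [stayBias]
  field_simp
  ring

lemma tendsto_mul_div_pow_of_lt {c x : ℕ → ℝ} {j a : ℕ} (hj : j < a) (hc : ∀ N, |c N| ≤ 1)
    (hx : ∀ N, |x N| ≤ (N : ℝ) ^ j) :
    Tendsto (fun N : ℕ ↦ c N * x N / (N : ℝ) ^ a) atTop (𝓝 0) := by
  refine squeeze_zero_norm' ?_ tendsto_one_div_atTop_nhds_zero_nat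
  filter_upwards [eventually_ge_atTop 1] with N hN
  have hN1 : (1 : ℝ) ≤ N := by exact_mod_cast hN
  have hNa : (N : ℝ) ^ a = N ^ (a - 1) * N := by rw [← pow_succ, Nat.sub_add_cancel (by omega)]
  rw [Real.norm_eq_abs, abs_div, abs_mul, abs_of_pos (by positivity : (0 : ℝ) < N ^ a),
    div_le_div_iff₀ (by positivity) (by positivity), one_mul, hNa]
  gcongr
  calc |c N| * |x N| ≤ 1 * (N : ℝ) ^ j := by gcongr; exacts [hc N, hx N]
    _ ≤ (N : ℝ) ^ (a - 1) := by rw [one_mul]; exact pow_le_pow_right₀ hN1 (by omega)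

section MomentRecursion

variable (M : ℕ → ℕ → ℕ → ℝ)

noncomputable def binomialTail (b a N : ℕ) : ℝ :=
  ∑ i ∈ range (a + 1), ((a + 1).choose (i + 1) : ℝ) *
    (stayBias N ^ ((i + 1 + b) % 2) * M ((i + 1 + b) % 2) (a - i) N)

variable {M}

lemma tendsto_binomialTail_div_pow (hbound : ∀ b a N, |M b a N| ≤ (N : ℝ) ^ a) (b a : ℕ)
    {L : ℝ} (hL : Tendsto (fun N : ℕ ↦ M ((1 + b) % 2) a N / (N : ℝ) ^ a) atTop (𝓝 L)) :
    Tendsto (fun N : ℕ ↦ binomialTail M b a N / (N : ℝ) ^ a) atTop (𝓝 ((a + 1) * L)) := by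
  have hlead : Tendsto (fun N : ℕ ↦ stayBias N ^ ((1 + b) % 2) * M ((1 + b) % 2) a N / N ^ a)
      atTop (𝓝 L) := by
    simpa [mul_div_assoc] using (tendsto_stayBias.pow ((1 + b) % 2)).mul hL
  have hrest : ∀ i ∈ range a, Tendsto (fun N : ℕ ↦ ((a + 1).choose (i + 1 + 1) : ℝ) *
      (stayBias N ^ ((i + 1 + 1 + b) % 2) * M ((i + 1 + 1 + b) % 2) (a - (i + 1)) N / N ^ a))
      atTop (𝓝 0) := fun i hi ↦ by
    simpa using (tendsto_mul_div_pow_of_lt (by simp at hi; omega)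
      (fun N ↦ by rw [abs_pow]; exact pow_le_one₀ (abs_nonneg _) (abs_stayBias_le_one N))
      (fun N ↦ hbound _ _ N)).const_mul ((a + 1).choose (i + 1 + 1) : ℝ)
  have hsum := (hlead.const_mul ((a : ℝ) + 1)).add (tendsto_finsetSum _ hrest)
  rw [sum_const_zero, add_zero] at hsum
  refine hsum.congr fun N ↦ ?_
  rw [binomialTail, sum_range_succ', add_div, sum_div]
  simp only [mul_div_assoc, zero_add, Nat.choose_one_right, Nat.sub_zero]
  push_cast
  ring

lemma eq_stayBias_pow_mul_add_binomialTail
    (hrec : ∀ b a N, 1 ≤ N → M b a (N + 1) = ∑ i ∈ range (a + 1),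
      (a.choose i : ℝ) * (stayBias N ^ ((i + b) % 2) * M ((i + b) % 2) (a - i) N))
    (b a : ℕ) {N : ℕ} (hN : 1 ≤ N) :
    M b (a + 1) (N + 1) = stayBias N ^ (b % 2) * M (b % 2) (a + 1) N + binomialTail M b a N := by
  rw [hrec b (a + 1) N hN, sum_range_succ', binomialTail, add_comm]
  simp [Nat.add_sub_add_right, add_right_comm _ 1 b]

theorem tendsto_moments_of_recurrence (hzero : ∀ N, M 0 0 N = 1)
    (hbound : ∀ b a N, |M b a N| ≤ (N : ℝ) ^ a)
    (hrec : ∀ b a N, 1 ≤ N → M b a (N + 1) = ∑ i ∈ range (a + 1),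
      (a.choose i : ℝ) * (stayBias N ^ ((i + b) % 2) * M ((i + b) % 2) (a - i) N))
    (a : ℕ) :
    Tendsto (fun N : ℕ ↦ M 0 a N / (N : ℝ) ^ a) atTop (𝓝 (uniformMoment a)) ∧
      Tendsto (fun N : ℕ ↦ M 1 a N / (N : ℝ) ^ a) atTop (𝓝 (uniformMoment (a + 1))) := by
  induction a with
  | zero =>
    refine ⟨by simp [hzero, uniformMoment], ?_⟩
    have h := tendsto_div_pow_of_eq_mul_add (v := M 1 0) (g := 0) (a := 0) (c := 0)
      (fun N hN ↦ by simpa [stayBias] using hrec 1 0 N hN) (by simp)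
    simpa [uniformMoment] using h
  | succ a ih =>
    constructor
    · have h := tendsto_div_pow_succ_of_tendsto_sub_div_pow (u := M 0 (a + 1)) (k := a)
        ((tendsto_binomialTail_div_pow hbound 0 a ih.2).congr' ?_)
      · convert h using 2
        field_simp
      filter_upwards [eventually_ge_atTop 1] with N hN
      simp [eq_stayBias_pow_mul_add_binomialTail hrec 0 a hN]
    · have h := tendsto_div_pow_of_eq_mul_add (v := M 1 (a + 1)) (a := a + 1)
        (fun N hN ↦ by simpa [stayBias] using eq_stayBias_pow_mul_add_binomialTail hrec 1 a hN)
        ((tendsto_binomialTail_div_pow hbound 1 a ih.1).congr' ?_)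
      · convert h using 2
        rw [uniformMoment_add_two]
        push_cast
        ring
      filter_upwards [eventually_ne_atTop 0] with N hN
      have hN : (N : ℝ) ≠ 0 := Nat.cast_ne_zero.2 hN
      rw [pow_succ]
      field_simp

end MomentRecursion

lemma pow_eq_pow_mod_two {R : Type*} [Monoid R] {x : R} (hx : x ^ 2 = 1) (n : ℕ) :
    x ^ n = x ^ (n % 2) := by
  conv_lhs => rw [← Nat.div_add_mod n 2, pow_add, pow_mul, hx, one_pow, one_mul]

lemma integral_neg_one_pow_eq {Ω : Type*} [MeasurableSpace Ω] {μ : Measure Ω}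
    [IsProbabilityMeasure μ] {X : Ω → ℕ} (hX : Measurable X) (h01 : ∀ ω, X ω = 0 ∨ X ω = 1) :
    ∫ ω, (-1 : ℝ) ^ X ω ∂μ = 1 - 2 * μ.real {ω | X ω = 1} := by
  have hs : MeasurableSet {ω | X ω = 1} := hX (measurableSet_singleton 1)
  have hpt : (fun ω ↦ (-1 : ℝ) ^ X ω) = fun ω ↦ 1 - 2 * {ω | X ω = 1}.indicator 1 ω := by
    funext ω
    rcases h01 ω with h | h <;> norm_num [h]
  rw [hpt, integral_sub (integrable_const 1) (((integrable_const 1).indicator hs).const_mul 2),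
    integral_const_mul, integral_indicator_one hs]
  simp

section CoinTurning

variable {Ω : Type*} (W : ℕ → Ω → ℕ)

/-- `Y_n`, with `Y_0 = 1`. -/
def coinSign (n : ℕ) (ω : Ω) : ℝ := (-1) ^ ∑ k ∈ Icc 1 n, W k ω

def coinSum (N : ℕ) (ω : Ω) : ℝ := ∑ n ∈ Icc 1 N, coinSign W n ω

lemma coinSign_succ (n : ℕ) (ω : Ω) :
    coinSign W (n + 1) ω = coinSign W n ω * (-1) ^ W (n + 1) ω := by
  rw [coinSign, coinSign, sum_Icc_succ_top (by omega), pow_add]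

lemma coinSum_succ (N : ℕ) (ω : Ω) :
    coinSum W (N + 1) ω = coinSum W N ω + coinSign W (N + 1) ω := by
  rw [coinSum, coinSum, sum_Icc_succ_top (by omega)]

lemma abs_coinSign (n : ℕ) (ω : Ω) : |coinSign W n ω| = 1 := by
  simp [coinSign]

lemma coinSign_sq (n : ℕ) (ω : Ω) : coinSign W n ω ^ 2 = 1 := by
  rw [← sq_abs, abs_coinSign, one_pow]

lemma abs_coinSum_pow_mul_coinSign_pow_le (N n a b : ℕ) (ω : Ω) :
    |coinSum W N ω ^ a * coinSign W n ω ^ b| ≤ (N : ℝ) ^ a := by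
  rw [abs_mul, abs_pow, abs_pow, abs_coinSign, one_pow, mul_one]
  gcongr
  calc |coinSum W N ω| ≤ ∑ n ∈ Icc 1 N, |coinSign W n ω| := abs_sum_le_sum_abs _ _
    _ = N := by simp [abs_coinSign]

lemma measurable_coinSign {m : MeasurableSpace Ω} {n : ℕ} (hW : ∀ k ≤ n, Measurable[m] (W k)) :
    Measurable[m] (coinSign W n) :=
  (measurable_of_countable fun t : ℕ ↦ (-1 : ℝ) ^ t).comp
    (Finset.measurable_sum _ fun k hk ↦ hW k (mem_Icc.1 hk).2)

lemma measurable_coinSum {m : MeasurableSpace Ω} {N : ℕ} (hW : ∀ k ≤ N, Measurable[m] (W k)) :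
    Measurable[m] (coinSum W N) :=
  Finset.measurable_sum _ fun _ hn ↦
    measurable_coinSign W fun k hk ↦ hW k (hk.trans (mem_Icc.1 hn).2)

lemma coinSum_succ_pow_mul_coinSign_succ_pow (N a b : ℕ) (ω : Ω) :
    coinSum W (N + 1) ω ^ a * coinSign W (N + 1) ω ^ b = ∑ i ∈ range (a + 1),
      (a.choose i : ℝ) * (coinSum W N ω ^ (a - i) * coinSign W (N + 1) ω ^ ((i + b) % 2)) := by
  rw [coinSum_succ, add_comm, add_pow, sum_mul]
  refine sum_congr rfl fun i _ ↦ ?_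
  rw [← pow_eq_pow_mod_two (coinSign_sq W _ ω), pow_add]
  ring

end CoinTurning

section CoinTurningMoments

variable {Ω : Type*} [MeasurableSpace Ω] (μ : Measure Ω) (W : ℕ → Ω → ℕ)

noncomputable def mixedMoment (b a N : ℕ) : ℝ :=
  ∫ ω, coinSum W N ω ^ a * coinSign W N ω ^ b ∂μ

variable {μ W}

lemma abs_mixedMoment_le [IsProbabilityMeasure μ] (b a N : ℕ) :
    |mixedMoment μ W b a N| ≤ (N : ℝ) ^ a := by
  simpa [mixedMoment] using norm_integral_le_of_norm_le_const (μ := μ)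
    (f := fun ω ↦ coinSum W N ω ^ a * coinSign W N ω ^ b)
    (ae_of_all _ fun ω ↦ abs_coinSum_pow_mul_coinSign_pow_le W N N a b ω)

lemma indepFun_coinSum_pow_mul_coinSign_pow (hW : ∀ k, Measurable (W k))
    (hindep : iIndepFun W μ) (N a b : ℕ) :
    IndepFun (fun ω ↦ coinSum W N ω ^ a * coinSign W N ω ^ b) (W (N + 1)) μ := by
  set past := ⨆ k ∈ Set.Iic N, MeasurableSpace.comap (W k) inferInstance
  have hpast : Indep past (⨆ k ∈ ({N + 1} : Set ℕ), MeasurableSpace.comap (W k) inferInstance) μ :=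
    indep_iSup_of_disjoint (fun k ↦ (hW k).comap_le) hindep.iIndep (by simp)
  have hW_past : ∀ k ≤ N, Measurable[past] (W k) := fun k hk ↦
    measurable_iff_comap_le.2 (le_iSup₂ (f := fun k (_ : k ∈ Set.Iic N) ↦
      MeasurableSpace.comap (W k) inferInstance) k hk)
  rw [IndepFun_iff_Indep]
  refine indep_of_indep_of_le_left (indep_of_indep_of_le_right hpast ?_) ?_
  · exact le_iSup₂ (f := fun k (_ : k ∈ ({N + 1} : Set ℕ)) ↦
      MeasurableSpace.comap (W k) inferInstance) (N + 1) rfl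
  · exact (((measurable_coinSum W hW_past).pow_const a).mul
      ((measurable_coinSign W hW_past).pow_const b)).comap_le

lemma integral_coinSum_pow_mul_coinSign_succ_pow [IsProbabilityMeasure μ]
    (hW : ∀ k, Measurable (W k)) (hindep : iIndepFun W μ) (N j e : ℕ) :
    ∫ ω, coinSum W N ω ^ j * coinSign W (N + 1) ω ^ (e % 2) ∂μ =
      (∫ ω, (-1 : ℝ) ^ W (N + 1) ω ∂μ) ^ (e % 2) * mixedMoment μ W (e % 2) j N := by
  have hind := (indepFun_coinSum_pow_mul_coinSign_pow hW hindep N j (e % 2)).comp measurable_id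
    (measurable_of_countable fun t : ℕ ↦ ((-1 : ℝ) ^ t) ^ (e % 2))
  have hprod := hind.integral_fun_mul_eq_mul_integral
    (((measurable_coinSum W fun k _ ↦ hW k).pow_const j).mul
      ((measurable_coinSign W fun k _ ↦ hW k).pow_const _)).aestronglyMeasurable
    ((measurable_of_countable _).comp (hW (N + 1))).aestronglyMeasurable
  simp only [Function.comp_apply, id] at hprod
  simp only [coinSign_succ, mul_pow, ← mul_assoc]
  rw [hprod, mixedMoment, mul_comm]
  congr 1
  rcases Nat.mod_two_eq_zero_or_one e with h | h <;> simp [h]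

lemma mixedMoment_succ [IsProbabilityMeasure μ] (hW : ∀ k, Measurable (W k))
    (hindep : iIndepFun W μ) (b a N : ℕ) :
    mixedMoment μ W b a (N + 1) = ∑ i ∈ range (a + 1), (a.choose i : ℝ) *
      ((∫ ω, (-1 : ℝ) ^ W (N + 1) ω ∂μ) ^ ((i + b) % 2) *
        mixedMoment μ W ((i + b) % 2) (a - i) N) := by
  have hint : ∀ j e, Integrable (fun ω ↦ coinSum W N ω ^ j * coinSign W (N + 1) ω ^ e) μ :=
    fun j e ↦ .of_bound ((((measurable_coinSum W fun k _ ↦ hW k).pow_const j).mul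
      ((measurable_coinSign W fun k _ ↦ hW k).pow_const e)).aestronglyMeasurable) _
      (ae_of_all _ fun ω ↦ abs_coinSum_pow_mul_coinSign_pow_le W N (N + 1) j e ω)
  simp_rw [mixedMoment, coinSum_succ_pow_mul_coinSign_succ_pow]
  rw [integral_finsetSum _ fun i _ ↦ (hint _ _).const_mul _]
  refine sum_congr rfl fun i _ ↦ ?_
  rw [integral_const_mul, integral_coinSum_pow_mul_coinSign_succ_pow hW hindep]
  rfl

end CoinTurningMoments

theorem coin_turning_moment_limit_general
    {Ω : Type*} [MeasurableSpace Ω] (μ : Measure Ω) [IsProbabilityMeasure μ]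
    (p : ℕ → ℝ) (hpn : ∀ n, 2 ≤ n → p n = 1 / n)
    (W : ℕ → Ω → ℕ) (hWmeas : ∀ k, Measurable (W k))
    (hWrange : ∀ k ω, W k ω = 0 ∨ W k ω = 1)
    (hWindep : iIndepFun W μ)
    (hWp : ∀ k, μ {ω | W k ω = 1} = ENNReal.ofReal (p k))
    (Y : ℕ → Ω → ℝ)
    (hY : ∀ n ω, Y n ω = (-1 : ℝ) ^ (∑ k ∈ Finset.Icc 1 n, W k ω))
    (S : ℕ → Ω → ℝ) (hS : ∀ N ω, S N ω = ∑ n ∈ Finset.Icc 1 N, Y n ω)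
    (K : ℕ) :
    Tendsto (fun N : ℕ => ∫ ω, (S N ω / N) ^ K ∂μ) atTop
      (nhds (if Even K then 1 / (K + 1) else 0)) := by
  obtain rfl : Y = coinSign W := funext₂ hY
  obtain rfl : S = coinSum W := funext₂ hS
  have hbias : ∀ N, 1 ≤ N → ∫ ω, (-1 : ℝ) ^ W (N + 1) ω ∂μ = stayBias N := fun N hN ↦ by
    rw [integral_neg_one_pow_eq (hWmeas _) (hWrange _), measureReal_def, hWp,
      hpn _ (by omega), ENNReal.toReal_ofReal (by positivity), stayBias]
    push_cast
    field_simp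
    ring
  have hlim := (tendsto_moments_of_recurrence (M := mixedMoment μ W) (fun N ↦ by simp [mixedMoment])
    abs_mixedMoment_le
    (fun b a N hN ↦ by simpa only [hbias N hN] using mixedMoment_succ hWmeas hWindep b a N) K).1
  simpa [mixedMoment, div_pow, integral_div, uniformMoment] using hlim

theorem coin_turning_moment_limit
    {Ω : Type*} [MeasurableSpace Ω] (μ : Measure Ω) [IsProbabilityMeasure μ]
    (p : ℕ → ℝ) (hp1 : p 1 = 1 / 2) (hpn : ∀ n, 2 ≤ n → p n = 1 / n)
    (W : ℕ → Ω → ℕ) (hWmeas : ∀ k, Measurable (W k))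
    (hWrange : ∀ k ω, W k ω = 0 ∨ W k ω = 1)
    (hWindep : iIndepFun W μ)
    (hWp : ∀ k, μ {ω | W k ω = 1} = ENNReal.ofReal (p k))
    (Y : ℕ → Ω → ℝ)
    (hY : ∀ n ω, Y n ω = (-1 : ℝ) ^ (∑ k ∈ Finset.Icc 1 n, W k ω))
    (S : ℕ → Ω → ℝ) (hS : ∀ N ω, S N ω = ∑ n ∈ Finset.Icc 1 N, Y n ω)
    (K : ℕ) (hK : 0 < K) :
    Tendsto (fun N : ℕ => ∫ ω, (S N ω / N) ^ K ∂μ) atTop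
      (nhds (if Even K then 1 / (K + 1) else 0)) :=
  coin_turning_moment_limit_general μ p hpn W hWmeas hWrange hWindep hWp Y hY S hS K
end
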